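/- From the position Q, after Alfred plays the jump ↗↓→↑ — hopping from a2 over b3 to c4, then over c3 and c2 to c1, then over d1 to e1, then over e2 to e3, removing all five chaps — Betty has a winning strategy from the resulting position (ball at e3, no chaps on the board, Betty to move). -/
import Mathlib


/-!
Formalization of Philosophers' Phutball on an `m × n` board (`m` rows, `n` columns).
Points are pairs `(column, row)` of integers, with columns `1, …, n` (a, b, c, …)
and rows `1, …, m` (bottom to top).  Player `true` is Alfred (first player, aims
for the top row `m`); player `false` is Betty (aims for the bottom row `1`).
-/

/-- A player: `true` is Alfred, `false` is Betty. -/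
abbrev Player := Bool

/-- A Phutball position: the ball's point `(column, row)`, the finite set of
chaps, and the player whose turn it is. -/
structure PState where
  ball : ℤ × ℤ
  chaps : Finset (ℤ × ℤ)
  turn : Player
deriving DecidableEq

/-- The eight horizontal, vertical and diagonal directions. -/
def dirs : Finset (ℤ × ℤ) :=
  {(1, 0), (1, 1), (0, 1), (-1, 1), (-1, 0), (-1, -1), (0, -1), (1, -1)}

/-- The point reached from `b` after `i` steps in direction `d`. -/
def ray (b d : ℤ × ℤ) (i : ℤ) : ℤ × ℤ := (b.1 + i * d.1, b.2 + i * d.2)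

/-- A point is on the `m × n` board. -/
def OnBoard (m n : ℤ) (p : ℤ × ℤ) : Prop :=
  1 ≤ p.1 ∧ p.1 ≤ n ∧ 1 ≤ p.2 ∧ p.2 ≤ m

/-- A single hop on a board with `n` columns: the ball at `b` moves in one of the
eight directions `d` over a contiguous nonempty line of `k` chaps, landing on the
first point beyond them that carries no chap; the jumped-over chaps are removed.
The landing point must not lie onto or past the sidelines (outside columns
`1, …, n`), but it may lie past the top or bottom row. -/
def Hop (n : ℤ) (b : ℤ × ℤ) (c : Finset (ℤ × ℤ)) (b' : ℤ × ℤ) (c' : Finset (ℤ × ℤ)) : Prop :=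
  ∃ d ∈ dirs, ∃ k : ℕ, 1 ≤ k ∧
    (∀ i : ℕ, 1 ≤ i → i ≤ k → ray b d i ∈ c) ∧
    ray b d (k + 1) ∉ c ∧
    1 ≤ (ray b d (k + 1)).1 ∧ (ray b d (k + 1)).1 ≤ n ∧
    b' = ray b d (k + 1) ∧
    c' = c \ Finset.image (fun i : ℕ => ray b d i) (Finset.Icc 1 k)

/-- A jump is a nonempty sequence of hops (the player may stop after any hop,
and the removed chaps cannot be re-used by later hops of the same jump).  The
jump can continue after a hop only if the ball has not been carried past the top
or bottom row (which would end the game immediately). -/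
inductive Jump (m n : ℤ) : ℤ × ℤ → Finset (ℤ × ℤ) → ℤ × ℤ → Finset (ℤ × ℤ) → Prop
  | single {b c b' c'} : Hop n b c b' c' → Jump m n b c b' c'
  | cons {b c b₁ c₁ b' c'} : Hop n b c b₁ c₁ → 1 ≤ b₁.2 → b₁.2 ≤ m →
      Jump m n b₁ c₁ b' c' → Jump m n b c b' c'

/-- The winner, if any, of a position (evaluated between turns): Alfred wins if
the ball rests on the top row `m` or has been carried past it; Betty wins if the
ball rests on the bottom row `1` or has been carried past it. -/
def winner (m : ℤ) (s : PState) : Option Player :=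
  if m ≤ s.ball.2 then some true else if s.ball.2 ≤ 1 then some false else none

/-- A single legal move on the `m × n` board: the player to move either places a
chap on a vacant on-board point, or moves the ball by a jump; the turn passes to
the other player. -/
def MoveRel (m n : ℤ) (s t : PState) : Prop :=
  t.turn = !s.turn ∧
    ((∃ p, OnBoard m n p ∧ p ∉ s.chaps ∧ p ≠ s.ball ∧
        t.ball = s.ball ∧ t.chaps = insert p s.chaps) ∨
      Jump m n s.ball s.chaps t.ball t.chaps)

/-- An infinite record of play: while the game is not over and a legal move
exists, a legal move is made; otherwise the position is frozen forever. -/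
def IsPlay (m n : ℤ) (f : ℕ → PState) : Prop :=
  ∀ k,
    (winner m (f k) = none ∧ (∃ t, MoveRel m n (f k) t) ∧ MoveRel m n (f k) (f (k + 1))) ∨
    ((winner m (f k) ≠ none ∨ ¬ ∃ t, MoveRel m n (f k) t) ∧ f (k + 1) = f k)

/-- A strategy for player `p` that always proposes a legal move whenever the game
is not over, it is `p`'s turn, and some legal move exists. -/
def LegalStrategy (m n : ℤ) (p : Player) (σ : PState → PState) : Prop :=
  ∀ s, s.turn = p → winner m s = none → (∃ t, MoveRel m n s t) → MoveRel m n s (σ s)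

/-- The play `f` follows the strategy `σ` of player `p`. -/
def Follows (m n : ℤ) (p : Player) (σ : PState → PState) (f : ℕ → PState) : Prop :=
  ∀ k, (f k).turn = p → winner m (f k) = none → (∃ t, MoveRel m n (f k) t) →
    f (k + 1) = σ (f k)

/-- Player `p` has a winning strategy from `s₀` on the `m × n` board: a legal
strategy guaranteeing that, against every play of the opponent, `p` wins after
finitely many moves. -/
def WinsFrom (m n : ℤ) (p : Player) (s₀ : PState) : Prop :=
  ∃ σ, LegalStrategy m n p σ ∧
    ∀ f, IsPlay m n f → f 0 = s₀ → Follows m n p σ f → ∃ k, winner m (f k) = some p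

/-- Player `p` has a drawing strategy from `s₀` on the `m × n` board: a legal
strategy guaranteeing that the opponent never wins (play may continue forever). -/
def DrawsFrom (m n : ℤ) (p : Player) (s₀ : PState) : Prop :=
  ∃ σ, LegalStrategy m n p σ ∧
    ∀ f, IsPlay m n f → f 0 = s₀ → Follows m n p σ f → ∀ k, winner m (f k) ≠ some (!p)

/-- A position is drawn if both players have drawing strategies from it. -/
def Drawn (m n : ℤ) (s : PState) : Prop :=
  DrawsFrom m n true s ∧ DrawsFrom m n false s

/-- The chaps of the position `Q` on the 5 × 5 board: b3, c3, c2, d1, e2. -/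
def Qchaps : Finset (ℤ × ℤ) := {(2, 3), (3, 3), (3, 2), (4, 1), (5, 2)}

/-- The position `Q`: ball at a2 = (1, 2), chaps at b3, c3, c2, d1, e2,
Alfred to move. -/
def Q : PState := ⟨(1, 2), Qchaps, true⟩

/-- The result of Alfred's jump ↗↓→↑ from `Q`: ball at e3 = (5, 3), no chaps,
Betty to move. -/
def Qjot : PState := ⟨(5, 3), (∅ : Finset (ℤ × ℤ)), false⟩


/-! Auxiliary lemmas for the proof of `Q_jot_loses`. -/

section Aux

/-- Generic tactic-free hop proof helper: prove a hop with given witnesses. -/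
lemma hop_of_witness {n : ℤ} {b b' : ℤ × ℤ} {c c' : Finset (ℤ × ℤ)}
    (d : ℤ × ℤ) (hd : d ∈ dirs) (k : ℕ) (hk : 1 ≤ k)
    (h1 : ∀ i : ℕ, 1 ≤ i → i ≤ k → ray b d i ∈ c)
    (h2 : ray b d (k + 1) ∉ c)
    (h3 : 1 ≤ (ray b d (k + 1)).1) (h4 : (ray b d (k + 1)).1 ≤ n)
    (h5 : b' = ray b d (k + 1))
    (h6 : c' = c \ Finset.image (fun i : ℕ => ray b d i) (Finset.Icc 1 k)) :
    Hop n b c b' c' :=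
  ⟨d, hd, k, hk, h1, h2, h3, h4, h5, h6⟩

lemma no_hop_empty {n : ℤ} {b b' : ℤ × ℤ} {c' : Finset (ℤ × ℤ)} :
    ¬ Hop n b ∅ b' c' := by
  rintro ⟨d, hd, k, hk, hmem, -⟩
  exact absurd (hmem 1 le_rfl hk) (by simp)

lemma no_jump_empty {m n : ℤ} {b b' : ℤ × ℤ} {c' : Finset (ℤ × ℤ)} :
    ¬ Jump m n b ∅ b' c' := by
  intro h
  cases h with
  | single h => exact no_hop_empty h
  | cons h _ _ _ => exact no_hop_empty h

/-- The only hop from `(5,3)` over the single chap `(5,2)` lands on `(5,1)`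
and empties the board. -/
lemma hop_53 {n : ℤ} {b' : ℤ × ℤ} {c' : Finset (ℤ × ℤ)}
    (h : Hop n (5,3) {((5:ℤ),(2:ℤ))} b' c') : b' = (5,1) ∧ c' = ∅ := by
  obtain ⟨d, hd, k, hk1, hmem, hnot, -, -, hb, hc⟩ := h
  have h1 := hmem 1 le_rfl hk1
  fin_cases hd <;> simp only [ray, Finset.mem_singleton, Prod.mk.injEq] at h1 <;> try omega
  -- remaining case: d = (0, -1)
  have hk2 : k = 1 := by
    by_contra hne
    have h2 := hmem 2 (by omega) (by omega)
    simp only [ray, Finset.mem_singleton, Prod.mk.injEq] at h2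
    omega
  subst hk2
  constructor
  · rw [hb]; simp [ray]
  · rw [hc]; decide

/-- Any jump from `(5,3)` over the single chap `(5,2)` ends with ball `(5,1)`. -/
lemma jump_53 {b' : ℤ × ℤ} {c' : Finset (ℤ × ℤ)}
    (h : Jump 5 5 (5,3) {((5:ℤ),(2:ℤ))} b' c') : b' = (5,1) := by
  cases h with
  | single h => exact (hop_53 h).1
  | cons h _ _ htail =>
      obtain ⟨-, hc⟩ := hop_53 h
      subst hc
      exact absurd htail no_jump_empty

instance : Inhabited PState := ⟨⟨(0,0), ∅, true⟩⟩

/-- Betty's strategy. -/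
noncomputable def bsig (s : PState) : PState :=
  if s.ball = ((5:ℤ),(3:ℤ)) ∧ s.chaps = ∅ then
    ⟨(5,3), {((5:ℤ),(2:ℤ))}, !s.turn⟩
  else if ((5:ℤ),(0:ℤ)) ∉ s.chaps ∧ s.ball = ((5:ℤ),(3:ℤ)) ∧ ((5:ℤ),(2:ℤ)) ∈ s.chaps then
    if ((5:ℤ),(1:ℤ)) ∈ s.chaps then
      ⟨(5,0), s.chaps \ {((5:ℤ),(2:ℤ)), ((5:ℤ),(1:ℤ))}, !s.turn⟩
    else
      ⟨(5,1), s.chaps \ {((5:ℤ),(2:ℤ))}, !s.turn⟩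
  else Classical.epsilon (MoveRel 5 5 s)

lemma bsig_legal : LegalStrategy 5 5 false bsig := by
  intro s hturn hwin hex
  unfold bsig
  split_ifs with h1 h2 h3
  · -- place a chap at (5,2)
    obtain ⟨hball, hch⟩ := h1
    refine ⟨by simp [hturn], Or.inl ⟨((5:ℤ),(2:ℤ)), ?_, ?_, ?_, ?_, ?_⟩⟩
    · exact ⟨by norm_num, by norm_num, by norm_num, by norm_num⟩
    · simp [hch]
    · rw [hball]; decide
    · rw [hball]
    · simp [hch]
  · -- jump down over (5,2),(5,1) to (5,0)
    obtain ⟨h0, hball, h2m⟩ := h2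
    refine ⟨by simp [hturn], Or.inr (Jump.single ?_)⟩
    rw [hball]
    refine hop_of_witness (0,-1) (by decide) 2 (by norm_num) ?_ ?_ ?_ ?_ ?_ ?_
    · intro i hi1 hi2
      interval_cases i
      · simpa [ray, Prod.ext_iff] using h2m
      · simpa [ray, Prod.ext_iff] using h3
    · simpa [ray, Prod.ext_iff] using h0
    · simp [ray]
    · simp [ray]
    · simp [ray]
    · congr 1 <;> decide
  · -- jump down over (5,2) to (5,1)
    obtain ⟨h0, hball, h2m⟩ := h2
    refine ⟨by simp [hturn], Or.inr (Jump.single ?_)⟩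
    rw [hball]
    refine hop_of_witness (0,-1) (by decide) 1 le_rfl ?_ ?_ ?_ ?_ ?_ ?_
    · intro i hi1 hi2
      interval_cases i
      simpa [ray, Prod.ext_iff] using h2m
    · simpa [ray, Prod.ext_iff] using h3
    · simp [ray]
    · simp [ray]
    · simp [ray]
    · congr 1 <;> decide
  · exact Classical.epsilon_spec hex

/-- winner computations -/
lemma winner_none {s : PState} (h1 : s.ball.2 = 3) : winner 5 s = none := by
  unfold winner
  rw [h1]
  norm_num

lemma winner_betty {s : PState} (h1 : s.ball.2 ≤ 1) : winner 5 s = some false := by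
  unfold winner
  rw [if_neg (by omega), if_pos h1]

/-- There is always a legal placement when few chaps are present. -/
lemma move_exists {s : PState} (hball : s.ball = ((5:ℤ),(3:ℤ)))
    (h1 : ∃ p : ℤ × ℤ, OnBoard 5 5 p ∧ p ∉ s.chaps ∧ p ≠ s.ball) :
    ∃ t, MoveRel 5 5 s t := by
  obtain ⟨p, hp1, hp2, hp3⟩ := h1
  exact ⟨⟨s.ball, insert p s.chaps, !s.turn⟩, rfl, Or.inl ⟨p, hp1, hp2, hp3, rfl, rfl⟩⟩

end Aux

lemma bsig_Qjot : bsig Qjot = ⟨(5,3), {((5:ℤ),(2:ℤ))}, true⟩ := by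
  unfold bsig
  rw [if_pos ⟨rfl, rfl⟩]
  rfl

lemma bsig_ball_low {s : PState}
    (h1 : ¬(s.ball = ((5:ℤ),(3:ℤ)) ∧ s.chaps = ∅))
    (h2 : ((5:ℤ),(0:ℤ)) ∉ s.chaps ∧ s.ball = ((5:ℤ),(3:ℤ)) ∧ ((5:ℤ),(2:ℤ)) ∈ s.chaps) :
    (bsig s).ball.2 ≤ 1 := by
  unfold bsig
  rw [if_neg h1, if_pos h2]
  split_ifs <;> norm_num

/-- From `Q`, after Alfred plays the jump ↗↓→↑ — hopping from a2 over b3 to c4,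
then over c3 and c2 to c1, then over d1 to e1, then over e2 to e3, removing all
five chaps — Betty has a winning strategy from the resulting position (ball at
e3, empty board, Betty to move).  The four constituent hops and the resulting
jump and move are all legal. -/

theorem Q_jot_loses :
    Hop 5 (1, 2) Qchaps (3, 4) ({(3, 3), (3, 2), (4, 1), (5, 2)} : Finset (ℤ × ℤ)) ∧
    Hop 5 (3, 4) ({(3, 3), (3, 2), (4, 1), (5, 2)} : Finset (ℤ × ℤ)) (3, 1)
      ({(4, 1), (5, 2)} : Finset (ℤ × ℤ)) ∧
    Hop 5 (3, 1) ({(4, 1), (5, 2)} : Finset (ℤ × ℤ)) (5, 1) ({(5, 2)} : Finset (ℤ × ℤ)) ∧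
    Hop 5 (5, 1) ({(5, 2)} : Finset (ℤ × ℤ)) (5, 3) (∅ : Finset (ℤ × ℤ)) ∧
    Jump 5 5 (1, 2) Qchaps (5, 3) (∅ : Finset (ℤ × ℤ)) ∧
    MoveRel 5 5 Q Qjot ∧
    WinsFrom 5 5 false Qjot := by
  have hop1 : Hop 5 (1, 2) Qchaps (3, 4) ({(3, 3), (3, 2), (4, 1), (5, 2)} : Finset (ℤ × ℤ)) := by
    refine hop_of_witness (1,1) (by decide) 1 le_rfl ?_ (by decide) (by decide) (by decide)
      (by decide) (by decide)
    intro i h1 h2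
    have : i = 1 := by omega
    subst this; decide
  have hop2 : Hop 5 (3, 4) ({(3, 3), (3, 2), (4, 1), (5, 2)} : Finset (ℤ × ℤ)) (3, 1)
      ({(4, 1), (5, 2)} : Finset (ℤ × ℤ)) := by
    refine hop_of_witness (0,-1) (by decide) 2 (by norm_num) ?_ (by decide) (by decide)
      (by decide) (by decide) (by decide)
    intro i h1 h2
    interval_cases i <;> decide
  have hop3 : Hop 5 (3, 1) ({(4, 1), (5, 2)} : Finset (ℤ × ℤ)) (5, 1)
      ({(5, 2)} : Finset (ℤ × ℤ)) := by
    refine hop_of_witness (1,0) (by decide) 1 le_rfl ?_ (by decide) (by decide) (by decide)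
      (by decide) (by decide)
    intro i h1 h2
    have : i = 1 := by omega
    subst this; decide
  have hop4 : Hop 5 (5, 1) ({(5, 2)} : Finset (ℤ × ℤ)) (5, 3) (∅ : Finset (ℤ × ℤ)) := by
    refine hop_of_witness (0,1) (by decide) 1 le_rfl ?_ (by decide) (by decide) (by decide)
      (by decide) (by decide)
    intro i h1 h2
    have : i = 1 := by omega
    subst this; decide
  have hjump : Jump 5 5 (1, 2) Qchaps (5, 3) (∅ : Finset (ℤ × ℤ)) := by
    refine Jump.cons hop1 (by norm_num) (by norm_num) ?_
    refine Jump.cons hop2 (by norm_num) (by norm_num) ?_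
    refine Jump.cons hop3 (by norm_num) (by norm_num) ?_
    exact Jump.single hop4
  have hmove : MoveRel 5 5 Q Qjot := ⟨rfl, Or.inr hjump⟩
  refine ⟨hop1, hop2, hop3, hop4, hjump, hmove, bsig, bsig_legal, ?_⟩
  intro f hplay h0 hfol
  -- step 0: Betty places a chap at (5,2)
  have hw0 : winner 5 (f 0) = none := by rw [h0]; decide
  have hex0 : ∃ t, MoveRel 5 5 (f 0) t := by
    rw [h0]
    exact move_exists rfl ⟨(1,1), by norm_num [OnBoard], by simp [Qjot], by decide⟩
  have hf1 : f 1 = ⟨(5,3), {((5:ℤ),(2:ℤ))}, true⟩ := by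
    rw [hfol 0 (by rw [h0]; rfl) hw0 hex0, h0, bsig_Qjot]
  -- step 1: Alfred moves
  have hw1 : winner 5 (f 1) = none := by rw [hf1]; decide
  have hex1 : ∃ t, MoveRel 5 5 (f 1) t := by
    rw [hf1]
    exact move_exists rfl ⟨(1,1), by norm_num [OnBoard], by decide, by decide⟩
  have hmv1 : MoveRel 5 5 (f 1) (f 2) := by
    rcases hplay 1 with ⟨-, -, h⟩ | ⟨h, -⟩
    · exact h
    · rcases h with h | h
      · exact absurd hw1 h
      · exact absurd hex1 h
  rw [hf1] at hmv1
  obtain ⟨hturn2, hcase⟩ := hmv1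
  rcases hcase with ⟨p, hpO, hpN, hpB, hb2, hc2⟩ | hj
  · -- Alfred placed a chap p; Betty jumps down and wins
    have hb2' : (f 2).ball = ((5:ℤ),(3:ℤ)) := hb2
    have hc2' : (f 2).chaps = insert p {((5:ℤ),(2:ℤ))} := hc2
    have hturn2' : (f 2).turn = false := hturn2
    have hw2 : winner 5 (f 2) = none := winner_none (by rw [hb2'])
    have hp0 : p ≠ ((5:ℤ),(0:ℤ)) := by
      intro h
      subst h
      exact absurd hpO.2.2.1 (by norm_num)
    have hex2 : ∃ t, MoveRel 5 5 (f 2) t := by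
      refine move_exists hb2' ?_
      by_cases hp : p = ((1:ℤ),(1:ℤ))
      · refine ⟨(2,1), by norm_num [OnBoard], ?_, by rw [hb2']; decide⟩
        rw [hc2', hp]
        decide
      · refine ⟨(1,1), by norm_num [OnBoard], ?_, by rw [hb2']; decide⟩
        rw [hc2']
        simp only [Finset.mem_insert, Finset.mem_singleton]
        push_neg
        exact ⟨Ne.symm hp, by decide⟩
    have hf3 : f 3 = bsig (f 2) := hfol 2 hturn2' hw2 hex2
    refine ⟨3, winner_betty ?_⟩
    rw [hf3]
    refine bsig_ball_low ?_ ⟨?_, hb2', ?_⟩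
    · rintro ⟨-, h⟩
      rw [hc2'] at h
      simp at h
    · rw [hc2']
      simp only [Finset.mem_insert, Finset.mem_singleton]
      push_neg
      exact ⟨Ne.symm hp0, by decide⟩
    · rw [hc2']
      simp
  · -- Alfred jumped; the only jump loses immediately
    have hb2 : (f 2).ball = ((5:ℤ),(1:ℤ)) := jump_53 hj
    exact ⟨2, winner_betty (by rw [hb2])⟩
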